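/- arXiv:2005.07590 — 4 statements merged into one kernel-verified Lean document; each statement's English description precedes it below -/
import Mathlib

section
/- Fix a health-care capacity c > 0 and let b* = L/(4c). For every peak-time parameter b with 0 < b < b* (equivalently a = L/b > 4c), with r = (a − 2c)/(2c), t_l(b) = b + (1/a)·log(r − sqrt(r² − 1)) and t_r(b) = b + (1/a)·log(r + sqrt(r² − 1)): x_b′(t_l(b)) = c = x_b′(t_r(b)); moreover for every t ∈ ℝ, x_b′(t) > c if and only if t_l(b) < t < t_r(b). Hence the set of times at which health-care capacity is weakly exceeded, {t : x_b′(t) ≥ c}, equals the closed interval [t_l(b), t_r(b)]. -/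
open Real MeasureTheory Filter

/-- The logistic infection curve with initial value `x₀` and peak-time parameter `b`:
`x_b t = exp (a t) / (exp (a b) + exp (a t))` where `a = log (1/x₀ - 1) / b`. -/
noncomputable def xcurve (x₀ b : ℝ) : ℝ → ℝ := fun t =>
  Real.exp (Real.log (1 / x₀ - 1) / b * t) /
    (Real.exp (Real.log (1 / x₀ - 1) / b * b) + Real.exp (Real.log (1 / x₀ - 1) / b * t))

/-!
Writing `u = exp (a (t - b))`, the wave is `x_b' = a u / (1 + u)²`, and `a = 2c(r + 1)` turns
`x_b' > c` into `u² - 2 r u + 1 < 0`. Since `a > 4c` gives `r > 1`, this quadratic has the real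
roots `r ± √(r² - 1)`, which are positive because their product is `1`; they are the values of
`u` at `t_l` and `t_r`, and `u` is strictly increasing in `t`.
-/

lemma hasDerivAt_logistic (a b t : ℝ) :
    HasDerivAt (fun t => exp (a * t) / (exp (a * b) + exp (a * t)))
      (a * exp (a * (t - b)) / (1 + exp (a * (t - b))) ^ 2) t := by
  have hexp : HasDerivAt (fun t => exp (a * t)) (exp (a * t) * a) t := by
    simpa using ((hasDerivAt_id t).const_mul a).exp
  refine (hexp.div (hexp.const_add (exp (a * b))) (by positivity)).congr_deriv ?_
  rw [mul_sub, exp_sub]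
  field_simp
  ring

lemma deriv_xcurve (x₀ b t : ℝ) :
    deriv (xcurve x₀ b) t =
      log (1 / x₀ - 1) / b * exp (log (1 / x₀ - 1) / b * (t - b)) /
        (1 + exp (log (1 / x₀ - 1) / b * (t - b))) ^ 2 :=
  (hasDerivAt_logistic _ b t).deriv

lemma wave_sub_capacity {a c r s : ℝ} (u : ℝ) (hu : 1 + u ≠ 0) (ha : a = 2 * c * (r + 1))
    (hs : s ^ 2 = r ^ 2 - 1) :
    a * u / (1 + u) ^ 2 - c = c / (1 + u) ^ 2 * -((u - (r - s)) * (u - (r + s))) := by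
  field_simp
  linear_combination u * ha - c * hs

lemma sub_sqrt_sq_sub_one_pos {r : ℝ} (hr : 1 ≤ r) : 0 < r - √(r ^ 2 - 1) := by
  have hs : √(r ^ 2 - 1) ^ 2 = r ^ 2 - 1 := sq_sqrt (by nlinarith)
  -- `(r - √(r² - 1)) (r + √(r² - 1)) = 1`
  nlinarith [sqrt_nonneg (r ^ 2 - 1)]

lemma exp_mul_sub_eq_of_eq_add_log {a b t y : ℝ} (ha : a ≠ 0) (hy : 0 < y)
    (ht : t = b + 1 / a * log y) : exp (a * (t - b)) = y := by
  rw [ht, add_sub_cancel_left, ← mul_assoc, mul_one_div_cancel ha, one_mul, exp_log hy]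

theorem capacity_exceedance_interval_general (x₀ : ℝ)
    (L : ℝ) (hL : L = Real.log (1 / x₀ - 1))
    (c : ℝ) (hc : 0 < c) (bstar : ℝ) (hbstar : bstar = L / (4 * c))
    (b : ℝ) (hb : 0 < b) (hbb : b < bstar) (a : ℝ) (ha : a = L / b)
    (r : ℝ) (hr : r = (a - 2 * c) / (2 * c))
    (tl tr : ℝ)
    (htl : tl = b + 1 / a * Real.log (r - Real.sqrt (r ^ 2 - 1)))
    (htr : tr = b + 1 / a * Real.log (r + Real.sqrt (r ^ 2 - 1))) :
    deriv (xcurve x₀ b) tl = c ∧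
    deriv (xcurve x₀ b) tr = c ∧
    (∀ t : ℝ, c < deriv (xcurve x₀ b) t ↔ tl < t ∧ t < tr) ∧
    {t : ℝ | c ≤ deriv (xcurve x₀ b) t} = Set.Icc tl tr := by
  have ha4c : 4 * c < a := by
    rw [hbstar, lt_div_iff₀ (by positivity)] at hbb
    rw [ha, lt_div_iff₀ hb]
    linarith
  have ha0 : 0 < a := by linarith
  have har : a = 2 * c * (r + 1) := by
    rw [hr]
    field_simp
    ring
  have hr1 : 1 ≤ r := by
    rw [hr, one_le_div (by positivity)]
    linarith
  set s := √(r ^ 2 - 1)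
  have hrs : 0 < r - s := sub_sqrt_sq_sub_one_pos hr1
  set u := fun t => exp (a * (t - b))
  have hu : StrictMono u := fun t t' h =>
    exp_lt_exp.2 (mul_lt_mul_of_pos_left (sub_lt_sub_right h b) ha0)
  have hul : u tl = r - s := exp_mul_sub_eq_of_eq_add_log ha0.ne' hrs htl
  have hur : u tr = r + s := exp_mul_sub_eq_of_eq_add_log ha0.ne' (by positivity) htr
  have hlr : u tl ≤ u tr := by linarith [sqrt_nonneg (r ^ 2 - 1)]
  have hwave : ∀ t, deriv (xcurve x₀ b) t - c =
      c / (1 + u t) ^ 2 * -((u t - u tl) * (u t - u tr)) := fun t => by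
    rw [deriv_xcurve, ← hL, ← ha, hul, hur]
    exact wave_sub_capacity _ (by positivity) har (sq_sqrt (by nlinarith))
  refine ⟨?_, ?_, fun t => ?_, Set.ext fun t => ?_⟩
  · simpa [sub_eq_zero] using hwave tl
  · simpa [sub_eq_zero] using hwave tr
  · rw [← sub_pos, hwave, mul_pos_iff_of_pos_left (by positivity), neg_pos,
      sub_mul_sub_neg_iff _ hlr, hu.lt_iff_lt, hu.lt_iff_lt]
  · rw [Set.mem_ofPred_eq, ← sub_nonneg, hwave,
      mul_nonneg_iff_right_nonneg_of_pos (by positivity), neg_nonneg,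
      sub_mul_sub_nonpos_iff _ hlr, hu.le_iff_le, hu.le_iff_le, Set.mem_Icc]

theorem capacity_exceedance_interval (x₀ : ℝ) (hx₀ : 0 < x₀) (hx₀' : x₀ < 1 / 2)
    (L : ℝ) (hL : L = Real.log (1 / x₀ - 1))
    (c : ℝ) (hc : 0 < c) (bstar : ℝ) (hbstar : bstar = L / (4 * c))
    (b : ℝ) (hb : 0 < b) (hbb : b < bstar) (a : ℝ) (ha : a = L / b)
    (r : ℝ) (hr : r = (a - 2 * c) / (2 * c))
    (tl tr : ℝ)
    (htl : tl = b + 1 / a * Real.log (r - Real.sqrt (r ^ 2 - 1)))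
    (htr : tr = b + 1 / a * Real.log (r + Real.sqrt (r ^ 2 - 1))) :
    deriv (xcurve x₀ b) tl = c ∧
    deriv (xcurve x₀ b) tr = c ∧
    (∀ t : ℝ, c < deriv (xcurve x₀ b) t ↔ tl < t ∧ t < tr) ∧
    {t : ℝ | c ≤ deriv (xcurve x₀ b) t} = Set.Icc tl tr :=
  capacity_exceedance_interval_general x₀ L hL c hc bstar hbstar b hb hbb a ha r hr tl tr htl htr
end

section
/- Fix a health-care capacity c > 0 and let b* = L/(4c). For every peak-time parameter b with 0 < b < b* (so a = L/b > 4c), the capacity exceedance satisfies the closed form E(b) = (x_b(t_r(b)) − x_b(t_l(b))) − c·(t_r(b) − t_l(b)), where, with r = (a − 2c)/(2c), t_l(b) = b + (1/a)·log(r − sqrt(r² − 1)) and t_r(b) = b + (1/a)·log(r + sqrt(r² − 1)). -/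
open Real MeasureTheory Filter

/-- The capacity exceedance `E(b) = ∫ₜ max (x_b′(t) - c) 0 dt`. -/
noncomputable def exceed (x₀ c b : ℝ) : ℝ :=
  ∫ t : ℝ, max (deriv (xcurve x₀ b) t - c) 0

noncomputable def logisticCurve (a b t : ℝ) : ℝ :=
  exp (a * t) / (exp (a * b) + exp (a * t))

noncomputable def logisticWave (a b t : ℝ) : ℝ :=
  a * exp (a * (t - b)) / (1 + exp (a * (t - b))) ^ 2

theorem hasDerivAt_logisticCurve (a b t : ℝ) :
    HasDerivAt (logisticCurve a b) (logisticWave a b t) t := by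
  have hexp : HasDerivAt (fun t => exp (a * t)) (exp (a * t) * a) t := by
    simpa using ((hasDerivAt_id t).const_mul a).exp
  have hquot := hexp.div (hexp.const_add (exp (a * b))) (by positivity)
  have hsplit : exp (a * t) = exp (a * b) * exp (a * (t - b)) := by
    rw [← exp_add]; congr 1; ring
  refine HasDerivAt.congr_deriv (f := logisticCurve a b) hquot ?_
  rw [logisticWave, hsplit]
  field_simp
  ring

theorem deriv_logisticCurve (a b : ℝ) : deriv (logisticCurve a b) = logisticWave a b :=
  funext fun t => (hasDerivAt_logisticCurve a b t).deriv

theorem continuous_logisticWave (a b : ℝ) : Continuous (logisticWave a b) :=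
  Continuous.div (by fun_prop) (by fun_prop) fun t => by positivity

theorem logisticWave_self (a b : ℝ) : logisticWave a b b = a / 4 := by
  norm_num [logisticWave]

theorem le_mul_div_one_add_sq_iff {a c r v : ℝ} (hc : 0 < c) (hv : 0 < v)
    (hr : r = (a - 2 * c) / (2 * c)) (hr1 : 1 ≤ r) :
    c ≤ a * v / (1 + v) ^ 2 ↔ v ∈ Set.Icc (r - √(r ^ 2 - 1)) (r + √(r ^ 2 - 1)) := by
  have hquad : a * v - c * (1 + v) ^ 2 = c * ((r ^ 2 - 1) - (v - r) ^ 2) := by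
    rw [hr]; field_simp; ring
  rw [le_div_iff₀ (by positivity), ← sub_nonneg, hquad, mul_nonneg_iff_of_pos_left hc, sub_nonneg,
    Real.sq_le (by nlinarith), Set.mem_Icc]
  constructor <;> rintro ⟨h₁, h₂⟩ <;> constructor <;> linarith

theorem exp_mul_sub_mem_Icc_iff {a b p q t : ℝ} (ha : 0 < a) (hp : 0 < p) (hq : 0 < q) :
    exp (a * (t - b)) ∈ Set.Icc p q ↔ t ∈ Set.Icc (b + 1 / a * log p) (b + 1 / a * log q) := by
  simp only [Set.mem_Icc, ← log_le_iff_le_exp hp, ← le_log_iff_exp_le hq, one_div_mul_eq_div,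
    ← le_sub_iff_add_le', ← sub_le_iff_le_add', div_le_iff₀' ha, le_div_iff₀' ha]

theorem le_logisticWave_iff {a b c r : ℝ} (hc : 0 < c) (hr : r = (a - 2 * c) / (2 * c))
    (h4c : 4 * c ≤ a) (t : ℝ) :
    c ≤ logisticWave a b t ↔
      t ∈ Set.Icc (b + 1 / a * log (r - √(r ^ 2 - 1))) (b + 1 / a * log (r + √(r ^ 2 - 1))) := by
  have hr1 : 1 ≤ r := by rw [hr, le_div_iff₀ (by positivity)]; linarith
  have hsqrt : √(r ^ 2 - 1) < r := (sqrt_lt' (by linarith)).2 (by linarith)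
  rw [logisticWave, le_mul_div_one_add_sq_iff hc (exp_pos _) hr hr1,
    exp_mul_sub_mem_Icc_iff (by linarith) (by linarith) (by positivity)]

theorem integral_max_sub_const_eq_of_superlevel_eq_Icc {f f' : ℝ → ℝ} {c l u : ℝ}
    (hf : ∀ t ∈ Set.Icc l u, HasDerivAt f (f' t) t) (hf' : IntervalIntegrable f' volume l u)
    (hlu : l ≤ u) (hsuper : ∀ t, c ≤ f' t ↔ t ∈ Set.Icc l u) :
    ∫ t, max (f' t - c) 0 = f u - f l - c * (u - l) := by
  have hmax : (fun t => max (f' t - c) 0) = (Set.Icc l u).indicator (fun t => f' t - c) := by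
    ext t
    by_cases ht : t ∈ Set.Icc l u
    · rw [Set.indicator_of_mem ht, max_eq_left (sub_nonneg.2 ((hsuper t).2 ht))]
    · rw [Set.indicator_of_notMem ht,
        max_eq_right (sub_nonpos.2 (not_le.1 (mt (hsuper t).1 ht)).le)]
  rw [hmax, integral_indicator measurableSet_Icc, integral_Icc_eq_integral_Ioc,
    ← intervalIntegral.integral_of_le hlu,
    intervalIntegral.integral_sub hf' intervalIntegrable_const,
    intervalIntegral.integral_eq_sub_of_hasDerivAt (by rwa [Set.uIcc_of_le hlu]) hf',
    intervalIntegral.integral_const, smul_eq_mul, mul_comm]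

theorem exceedance_closed_form_general (x₀ : ℝ)
    (L : ℝ) (hL : L = Real.log (1 / x₀ - 1))
    (c : ℝ) (hc : 0 < c) (bstar : ℝ) (hbstar : bstar = L / (4 * c))
    (b : ℝ) (hb : 0 < b) (hbb : b < bstar) (a : ℝ) (ha : a = L / b)
    (r : ℝ) (hr : r = (a - 2 * c) / (2 * c))
    (tl tr : ℝ)
    (htl : tl = b + 1 / a * Real.log (r - Real.sqrt (r ^ 2 - 1)))
    (htr : tr = b + 1 / a * Real.log (r + Real.sqrt (r ^ 2 - 1))) :
    exceed x₀ c b = (xcurve x₀ b tr - xcurve x₀ b tl) - c * (tr - tl) := by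
  have h4c : 4 * c < a := by
    rw [hbstar, lt_div_iff₀ (by positivity)] at hbb
    rw [ha, lt_div_iff₀ hb]
    linarith
  have hcurve : xcurve x₀ b = logisticCurve a b := by
    subst ha hL
    rfl
  have hsuper : ∀ t, c ≤ logisticWave a b t ↔ t ∈ Set.Icc tl tr := by
    rw [htl, htr]
    exact le_logisticWave_iff hc hr h4c.le
  have hlu : tl ≤ tr :=
    Set.nonempty_Icc.1 ⟨b, (hsuper b).1 (by rw [logisticWave_self]; linarith)⟩
  rw [exceed, hcurve, deriv_logisticCurve]
  exact integral_max_sub_const_eq_of_superlevel_eq_Icc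
    (fun t _ => hasDerivAt_logisticCurve a b t)
    ((continuous_logisticWave a b).intervalIntegrable _ _) hlu hsuper

theorem exceedance_closed_form (x₀ : ℝ) (hx₀ : 0 < x₀) (hx₀' : x₀ < 1 / 2)
    (L : ℝ) (hL : L = Real.log (1 / x₀ - 1))
    (c : ℝ) (hc : 0 < c) (bstar : ℝ) (hbstar : bstar = L / (4 * c))
    (b : ℝ) (hb : 0 < b) (hbb : b < bstar) (a : ℝ) (ha : a = L / b)
    (r : ℝ) (hr : r = (a - 2 * c) / (2 * c))
    (tl tr : ℝ)
    (htl : tl = b + 1 / a * Real.log (r - Real.sqrt (r ^ 2 - 1)))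
    (htr : tr = b + 1 / a * Real.log (r + Real.sqrt (r ^ 2 - 1))) :
    exceed x₀ c b = (xcurve x₀ b tr - xcurve x₀ b tl) - c * (tr - tl) :=
  exceedance_closed_form_general x₀ L hL c hc bstar hbstar b hb hbb a ha r hr tl tr htl htr
end

section
/- Fix a health-care capacity c > 0 and let b* = L/(4c). For every peak-time parameter b with 0 < b < b*, one has the strict inequality c·(t_r(b) − t_l(b)) < x_b(t_r(b)) − x_b(t_l(b)), where, with a = L/b and r = (a − 2c)/(2c), t_l(b) = b + (1/a)·log(r − sqrt(r² − 1)) and t_r(b) = b + (1/a)·log(r + sqrt(r² − 1)). Equivalently, the capacity exceedance satisfies E(b) > 0. -/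
open Real MeasureTheory Filter

open Set

/-!
The curve is `t ↦ σ (a (t - b))` with `σ` the standard sigmoid, and its wave is
`a / (2 (1 + cosh (a (t - b))))`. Writing `r = cosh y` with `y > 0`, the capacity is
`c = a / (2 (1 + cosh y))`, so the wave exceeds `c` exactly on `[b - y/a, b + y/a] = [t_l, t_r]`.
There the curve gains `σ y - σ (-y) = sinh y / (1 + cosh y)` while the capacity only accounts for
`c · 2y/a = y / (1 + cosh y)`; hence `E(b) = (sinh y - y) / (1 + cosh y) > 0`.
-/

namespace Real

lemma sigmoid_mul_one_sub_sigmoid (z : ℝ) :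
    sigmoid z * (1 - sigmoid z) = (2 * (1 + cosh z))⁻¹ := by
  rw [← sigmoid_neg, sigmoid_def, sigmoid_def, neg_neg, cosh_eq, exp_neg]
  field_simp
  ring

lemma sigmoid_sub_sigmoid_neg (y : ℝ) : sigmoid y - sigmoid (-y) = sinh y / (1 + cosh y) := by
  rw [sigmoid_def, sigmoid_def, neg_neg, sinh_eq, cosh_eq, exp_neg]
  field_simp
  ring

end Real

theorem integral_max_deriv_sub_const_eq {f f' : ℝ → ℝ} {c l r : ℝ} (hlr : l ≤ r)
    (hf : ∀ t, HasDerivAt f (f' t) t) (hf' : Continuous f')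
    (hin : ∀ t ∈ Icc l r, c ≤ f' t) (hout : ∀ t ∉ Icc l r, f' t ≤ c) :
    ∫ t, max (f' t - c) 0 = f r - f l - c * (r - l) := by
  rw [← setIntegral_eq_integral_of_forall_compl_eq_zero
      fun t ht => max_eq_right (sub_nonpos.2 (hout t ht)),
    setIntegral_congr_fun measurableSet_Icc fun t ht => max_eq_left (sub_nonneg.2 (hin t ht)),
    integral_Icc_eq_integral_Ioc, ← intervalIntegral.integral_of_le hlr,
    intervalIntegral.integral_sub (hf'.intervalIntegrable l r) intervalIntegrable_const,
    intervalIntegral.integral_eq_sub_of_hasDerivAt (fun t _ => hf t) (hf'.intervalIntegrable l r),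
    intervalIntegral.integral_const, smul_eq_mul, mul_comm]

theorem xcurve_eq_sigmoid (x₀ b : ℝ) :
    xcurve x₀ b = fun t => sigmoid (Real.log (1 / x₀ - 1) / b * (t - b)) := by
  funext t
  rw [xcurve, sigmoid_def, neg_mul_eq_mul_neg, neg_sub, mul_sub, exp_sub]
  field_simp
  ring

theorem hasDerivAt_sigmoid_affine (a b t : ℝ) :
    HasDerivAt (fun t => sigmoid (a * (t - b))) (a / (2 * (1 + cosh (a * (t - b))))) t := by
  have := (hasDerivAt_sigmoid (a * (t - b))).comp t (((hasDerivAt_id t).sub_const b).const_mul a)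
  rwa [sigmoid_mul_one_sub_sigmoid, mul_one, inv_mul_eq_div] at this

section SigmoidWave

variable {a b y : ℝ}

theorem div_two_one_add_cosh_le_iff {t : ℝ} (ha : 0 < a) (hy : 0 ≤ y) :
    a / (2 * (1 + cosh y)) ≤ a / (2 * (1 + cosh (a * (t - b)))) ↔
      t ∈ Icc (b - y / a) (b + y / a) := by
  rw [div_le_div_iff_of_pos_left ha (by positivity) (by positivity), mul_le_mul_iff_right₀ two_pos,
    add_le_add_iff_left, cosh_le_cosh, abs_of_nonneg hy, ← mem_Icc_iff_abs_le, abs_mul,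
    abs_of_pos ha, abs_sub_comm, le_div_iff₀ ha, mul_comm]

theorem sigmoid_affine_sub_sigmoid_affine (ha : a ≠ 0) :
    sigmoid (a * (b + y / a - b)) - sigmoid (a * (b - y / a - b)) = sinh y / (1 + cosh y) := by
  rw [add_sub_cancel_left, sub_sub_cancel_left, mul_neg, mul_div_cancel₀ y ha,
    sigmoid_sub_sigmoid_neg]

theorem div_two_one_add_cosh_mul_sub (ha : a ≠ 0) :
    a / (2 * (1 + cosh y)) * (b + y / a - (b - y / a)) = y / (1 + cosh y) := by
  have : 0 < 1 + cosh y := by positivity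
  field_simp
  ring

theorem integral_max_deriv_sigmoid_affine_sub (ha : 0 < a) (hy : 0 ≤ y) :
    ∫ t, max (deriv (fun t => sigmoid (a * (t - b))) t - a / (2 * (1 + cosh y))) 0 =
      (sinh y - y) / (1 + cosh y) := by
  simp_rw [(hasDerivAt_sigmoid_affine a b _).deriv]
  rw [integral_max_deriv_sub_const_eq (by linarith [div_nonneg hy ha.le])
      (hasDerivAt_sigmoid_affine a b)
      (continuous_const.div (by fun_prop) fun t => by positivity)
      (fun t => (div_two_one_add_cosh_le_iff ha hy).2)
      (fun t ht => le_of_not_ge (mt (div_two_one_add_cosh_le_iff ha hy).1 ht)),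
    sigmoid_affine_sub_sigmoid_affine ha.ne', div_two_one_add_cosh_mul_sub ha.ne', sub_div]

end SigmoidWave

theorem exceedance_positive_below_bstar_general (x₀ : ℝ)
    (L : ℝ) (hL : L = Real.log (1 / x₀ - 1))
    (c : ℝ) (hc : 0 < c) (bstar : ℝ) (hbstar : bstar = L / (4 * c))
    (b : ℝ) (hb : 0 < b) (hbb : b < bstar) (a : ℝ) (ha : a = L / b)
    (r : ℝ) (hr : r = (a - 2 * c) / (2 * c))
    (tl tr : ℝ)
    (htl : tl = b + 1 / a * Real.log (r - Real.sqrt (r ^ 2 - 1)))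
    (htr : tr = b + 1 / a * Real.log (r + Real.sqrt (r ^ 2 - 1))) :
    c * (tr - tl) < xcurve x₀ b tr - xcurve x₀ b tl ∧
    0 < exceed x₀ c b := by
  have h4c : 4 * c < a := by
    rw [hbstar, lt_div_iff₀ (by positivity)] at hbb
    rw [ha, lt_div_iff₀ hb]
    linarith
  have hr1 : 1 < r := by
    rw [hr, lt_div_iff₀ (by positivity)]
    linarith
  have ha0 : a ≠ 0 := by linarith
  set y := arcosh r
  have hy : 0 < y := arcosh_pos hr1
  have hca : c = a / (2 * (1 + cosh y)) := by
    have : 2 * (1 + r) = a / c := by rw [hr]; field_simp; ring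
    rw [cosh_arcosh hr1.le, this, div_div_cancel₀ ha0]
  have htl' : tl = b - y / a := by
    rw [htl, ← add_sqrt_self_sq_sub_one_inv hr1.le, log_inv, ← arcosh]
    ring
  have htr' : tr = b + y / a := by
    rw [htr, ← arcosh]
    ring
  have hx : xcurve x₀ b = fun t => sigmoid (a * (t - b)) := by
    rw [xcurve_eq_sigmoid, ← hL, ← ha]
  have hsinh : y < sinh y := self_lt_sinh_iff.2 hy
  rw [exceed, hx, htl', htr', hca, div_two_one_add_cosh_mul_sub ha0,
    sigmoid_affine_sub_sigmoid_affine ha0, integral_max_deriv_sigmoid_affine_sub (by linarith) hy.le]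
  exact ⟨by gcongr, div_pos (sub_pos.2 hsinh) (by positivity)⟩

theorem exceedance_positive_below_bstar (x₀ : ℝ) (hx₀ : 0 < x₀) (hx₀' : x₀ < 1 / 2)
    (L : ℝ) (hL : L = Real.log (1 / x₀ - 1))
    (c : ℝ) (hc : 0 < c) (bstar : ℝ) (hbstar : bstar = L / (4 * c))
    (b : ℝ) (hb : 0 < b) (hbb : b < bstar) (a : ℝ) (ha : a = L / b)
    (r : ℝ) (hr : r = (a - 2 * c) / (2 * c))
    (tl tr : ℝ)
    (htl : tl = b + 1 / a * Real.log (r - Real.sqrt (r ^ 2 - 1)))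
    (htr : tr = b + 1 / a * Real.log (r + Real.sqrt (r ^ 2 - 1))) :
    c * (tr - tl) < xcurve x₀ b tr - xcurve x₀ b tl ∧
    0 < exceed x₀ c b :=
  exceedance_positive_below_bstar_general x₀ L hL c hc bstar hbstar b hb hbb a ha r hr tl tr htl htr
end

section
/- (Proposition 2.) Suppose g is constant on [b̲, ∞), say g(b) = g₀ with g₀ ≥ 1 for all b ≥ b̲, and let the welfare weight λ ∈ [0, 1] be arbitrary. Then every peak-time parameter b ≥ max(b̲, b*) minimizes the welfare loss on [b̲, ∞): W_loss(b) ≤ W_loss(b′) for all b′ ≥ b̲. That is, if production is unaffected by when the pandemic peaks, it is optimal never to exceed health-care capacity. -/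
open Real MeasureTheory Filter

/-!
The infection wave of a logistic curve `exp (a t) / (K + exp (a t))` is `a · q(t)` with
`q = K exp (a t) / (K + exp (a t))²`, and AM–GM gives `0 ≤ q ≤ 1/4`. For `b ≥ b*` the rate
`a = L / b` is at most `4c`, so the wave never exceeds capacity and `E(b) = 0`. With `g`
constant, the production term of `W_loss` does not depend on the peak time, while `E ≥ 0`.
-/

lemma mul_div_add_sq_le_one_div_four (x y : ℝ) : x * y / (x + y) ^ 2 ≤ 1 / 4 := by
  rcases eq_or_ne ((x + y) ^ 2) 0 with h | h
  · simp [h]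
  · rw [div_le_iff₀ (lt_of_le_of_ne (sq_nonneg _) h.symm)]
    linarith [four_mul_le_sq_add x y]

lemma hasDerivAt_exp_div_const_add_exp {K : ℝ} (hK : 0 ≤ K) (a t : ℝ) :
    HasDerivAt (fun s => exp (a * s) / (K + exp (a * s)))
      (a * (K * exp (a * t) / (K + exp (a * t)) ^ 2)) t := by
  have hexp : HasDerivAt (fun s => exp (a * s)) (exp (a * t) * a) t :=
    ((hasDerivAt_id t).const_mul a).exp.congr_deriv (by simp)
  refine (hexp.div (hexp.const_add K) (by positivity)).congr_deriv ?_
  field_simp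
  ring

lemma deriv_exp_div_const_add_exp_le {a K c : ℝ} (hK : 0 ≤ K) (hc : 0 ≤ c) (ha : a ≤ 4 * c)
    (t : ℝ) : deriv (fun s => exp (a * s) / (K + exp (a * s))) t ≤ c := by
  rw [(hasDerivAt_exp_div_const_add_exp hK a t).deriv]
  set q := K * exp (a * t) / (K + exp (a * t)) ^ 2
  have hq0 : 0 ≤ q := by positivity
  have hq : q ≤ 1 / 4 := mul_div_add_sq_le_one_div_four _ _
  -- `c - a q = (4c - a) q + c (1 - 4q)`
  nlinarith [mul_nonneg (sub_nonneg.2 ha) hq0]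

lemma exceed_nonneg (x₀ c b : ℝ) : 0 ≤ exceed x₀ c b :=
  integral_nonneg fun _ => le_max_right _ _

lemma exceed_eq_zero {x₀ c b : ℝ} (hc : 0 < c) (hb : 0 < b)
    (hcb : log (1 / x₀ - 1) / (4 * c) ≤ b) : exceed x₀ c b = 0 := by
  have ha : log (1 / x₀ - 1) / b ≤ 4 * c := by
    rw [div_le_iff₀ hb]
    rw [div_le_iff₀ (by positivity)] at hcb
    linarith
  have hwave (t : ℝ) : deriv (xcurve x₀ b) t ≤ c :=
    deriv_exp_div_const_add_exp_le (exp_pos _).le hc.le ha t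
  have hzero : (fun t => max (deriv (xcurve x₀ b) t - c) 0) = 0 :=
    funext fun t => max_eq_right (sub_nonpos.2 (hwave t))
  rw [exceed, hzero, Pi.zero_def, integral_zero]

theorem prop2_constant_g_general (x₀ : ℝ)
    (L : ℝ) (hL : L = Real.log (1 / x₀ - 1))
    (c : ℝ) (hc : 0 < c) (bstar : ℝ) (hbstar : bstar = L / (4 * c))
    (blow : ℝ) (hblow : 0 < blow)
    (lam : ℝ) (hlam1 : lam ≤ 1)
    (g : ℝ → ℝ) (g₀ : ℝ) (hgconst : ∀ b, blow ≤ b → g b = g₀)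
    (W : ℝ → ℝ)
    (hW : ∀ b, blow ≤ b → W b = lam * g b * (1 - x₀) + (1 - lam) * exceed x₀ c b) :
    ∀ b, max blow bstar ≤ b → ∀ b', blow ≤ b' → W b ≤ W b' := by
  intro b hb b' hb'
  obtain ⟨hblowb, hbstarb⟩ := max_le_iff.1 hb
  have hE : exceed x₀ c b = 0 :=
    exceed_eq_zero hc (hblow.trans_le hblowb) (hL ▸ hbstar ▸ hbstarb)
  rw [hW b hblowb, hW b' hb', hgconst b hblowb, hgconst b' hb', hE]
  nlinarith [exceed_nonneg x₀ c b']

theorem prop2_constant_g (x₀ : ℝ) (hx₀ : 0 < x₀) (hx₀' : x₀ < 1 / 2)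
    (L : ℝ) (hL : L = Real.log (1 / x₀ - 1))
    (c : ℝ) (hc : 0 < c) (bstar : ℝ) (hbstar : bstar = L / (4 * c))
    (blow : ℝ) (hblow : 0 < blow)
    (lam : ℝ) (hlam0 : 0 ≤ lam) (hlam1 : lam ≤ 1)
    (g : ℝ → ℝ) (g₀ : ℝ) (hg₀ : 1 ≤ g₀) (hgconst : ∀ b, blow ≤ b → g b = g₀)
    (W : ℝ → ℝ)
    (hW : ∀ b, blow ≤ b → W b = lam * g b * (1 - x₀) + (1 - lam) * exceed x₀ c b) :
    ∀ b, max blow bstar ≤ b → ∀ b', blow ≤ b' → W b ≤ W b' :=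
  prop2_constant_g_general x₀ L hL c hc bstar hbstar blow hblow lam hlam1 g g₀ hgconst W hW
end
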